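/- Let A be a dg algebra over the field F₂ with two elements. If (N, δ¹) is a type D structure over A, define iterated structure maps δ_k : N → A^{⊗k} ⊗ N by δ₀ = id and δ_k = (id_{A^{⊗(k-1)}} ⊗ δ¹) ∘ δ_{k-1}. Suppose N is 'bounded', i.e., δ_k = 0 for all sufficiently large k. Then for a right A_∞-module (M, {m_{k+1}}) over A, the operation ∂(x ⊗ y) = Σ_{k≥0} (m_{k+1} ⊗ id_N)(x ⊗ δ_k(y)) on M ⊗ N is a finite sum and satisfies ∂² = 0. -/

import Mathlib

open scoped TensorProduct

set_option synthInstance.maxHeartbeats 1000000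
set_option maxHeartbeats 1000000

namespace Stmt12

/-- Work over the field `F₂` with two elements. -/
abbrev F2 : Type := ZMod 2

variable (A : Type) [Ring A] [Algebra F2 A]

/-- The `n`-th tensor power `A^{⊗n}` over `F₂`. -/
abbrev TP (n : ℕ) : Type := ⨂[F2] _ : Fin n, A

/-- Splitting a tensor power: `A^{⊗(m+l)} ≅ A^{⊗m} ⊗ A^{⊗l}`. -/
noncomputable def split (m l : ℕ) : TP A (m + l) ≃ₗ[F2] TP A m ⊗[F2] TP A l :=
  (PiTensorProduct.reindex F2 (fun _ : Fin (m + l) => A)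
      (finSumFinEquiv (m := m) (n := l)).symm).trans
    (PiTensorProduct.tmulEquiv F2 A).symm

/-- `A ≅ A^{⊗1}`. -/
noncomputable def fromA : A ≃ₗ[F2] TP A 1 :=
  (PiTensorProduct.subsingletonEquiv (R := F2) (s := fun _ : Fin 1 => A) (0 : Fin 1)).symm

/-- The map `id^{⊗i} ⊗ f ⊗ id^{⊗l} : A^{⊗(i+j+l)} → A^{⊗(i+1+l)}`. -/
noncomputable def ins (i j l : ℕ) (f : TP A j →ₗ[F2] A) :
    TP A (i + j + l) →ₗ[F2] TP A (i + 1 + l) :=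
  (split A (i + 1) l).symm.toLinearMap
    ∘ₗ (TensorProduct.map (split A i 1).symm.toLinearMap LinearMap.id)
    ∘ₗ (TensorProduct.map
          (TensorProduct.map (LinearMap.id : TP A i →ₗ[F2] TP A i)
            ((fromA A).toLinearMap ∘ₗ f))
          (LinearMap.id : TP A l →ₗ[F2] TP A l))
    ∘ₗ (TensorProduct.map (split A i j).toLinearMap LinearMap.id)
    ∘ₗ (split A (i + j) l).toLinearMap

/-- The identification `A^{⊗n} ≅ A^{⊗m}` for `n = m`. -/
noncomputable def castTP {n m : ℕ} (h : n = m) : TP A n →ₗ[F2] TP A m :=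
  (PiTensorProduct.reindex F2 (fun _ : Fin n => A) (finCongr h)).toLinearMap

/-- Multiplication `μ₂ : A^{⊗2} → A`. -/
noncomputable def mul₂ : TP A 2 →ₗ[F2] A :=
  (LinearMap.mul' F2 A)
    ∘ₗ (TensorProduct.map (fromA A).symm.toLinearMap (fromA A).symm.toLinearMap)
    ∘ₗ (split A 1 1).toLinearMap

section TypeD

variable (N : Type) [AddCommGroup N] [Module F2 N]

/-- The type D structure equation over the dg algebra `(A, dA)`:
`(μ₂ ⊗ id)(id ⊗ δ¹)δ¹ + (dA ⊗ id)δ¹ = 0`. -/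
def IsTypeD (dA : A →ₗ[F2] A) (δ : N →ₗ[F2] A ⊗[F2] N) : Prop :=
  (TensorProduct.map (LinearMap.mul' F2 A) (LinearMap.id : N →ₗ[F2] N)) ∘ₗ
      (TensorProduct.assoc F2 A A N).symm.toLinearMap ∘ₗ
      (TensorProduct.map (LinearMap.id : A →ₗ[F2] A) δ) ∘ₗ δ
    + (TensorProduct.map dA (LinearMap.id : N →ₗ[F2] N)) ∘ₗ δ = 0

/-- The iterated structure maps `δ_m : N → A^{⊗m} ⊗ N` of a type D structure:
`δ₀ = id` and `δ_m = (id ⊗ δ¹) ∘ δ_{m-1}`. -/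
noncomputable def δiter (δ : N →ₗ[F2] A ⊗[F2] N) : ∀ m, N →ₗ[F2] TP A m ⊗[F2] N
  | 0 => (TensorProduct.map (PiTensorProduct.isEmptyEquiv (Fin 0)).symm.toLinearMap
        (LinearMap.id : N →ₗ[F2] N))
      ∘ₗ (TensorProduct.lid F2 N).symm.toLinearMap
  | (m + 1) =>
      (TensorProduct.map
          (((TensorProduct.congr (LinearEquiv.refl F2 (TP A m)) (fromA A)).trans
            (split A m 1).symm).toLinearMap)
          (LinearMap.id : N →ₗ[F2] N))
      ∘ₗ (TensorProduct.assoc F2 (TP A m) A N).symm.toLinearMap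
      ∘ₗ (TensorProduct.map (LinearMap.id : TP A m →ₗ[F2] TP A m) δ)
      ∘ₗ δiter δ m

end TypeD

open PiTensorProduct in
lemma fromA_apply (a : A) : fromA A a = tprod F2 (fun _ : Fin 1 => a) := by
  exact PiTensorProduct.subsingletonEquiv_symm_apply' (R := F2) (M := A) (0 : Fin 1) a

lemma castTP_rfl {n : ℕ} (h : n = n) : castTP A h = LinearMap.id := by
  simp [castTP]

lemma char2_cancel {X : Type*} [AddCommGroup X] [Module F2 X] {f g : X}
    (h : f + g = 0) : f = g := by
  have hgg : g + g = 0 := by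
    rw [← two_smul F2 g, show (2 : F2) = 0 from rfl, zero_smul]
  calc f = f + (g + g) := by rw [hgg, add_zero]
    _ = (f + g) + g := by abel
    _ = g := by rw [h, zero_add]
open PiTensorProduct in
lemma splitSymm_tprod {m l : ℕ} (p : Fin m → A) (q : Fin l → A) :
    (split A m l).symm (tprod F2 p ⊗ₜ[F2] tprod F2 q)
      = tprod F2 (fun i => Sum.elim p q (finSumFinEquiv.symm i)) := by
  simp [split, LinearEquiv.trans_symm, LinearEquiv.trans_apply, PiTensorProduct.reindex_symm]

section glue
variable {A}
variable {k l : ℕ}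

lemma glue_assoc (p : Fin k → A) (q : Fin l → A) (a : A) :
    (fun i : Fin (k + l + 1) =>
        Sum.elim (fun i' => Sum.elim p q (finSumFinEquiv.symm i')) (fun _ : Fin 1 => a)
          (finSumFinEquiv.symm i))
      = (fun i : Fin (k + (l + 1)) =>
        Sum.elim p (fun i' => Sum.elim q (fun _ : Fin 1 => a) (finSumFinEquiv.symm i'))
          (finSumFinEquiv.symm i)) := by
  funext i
  refine Fin.addCases (fun j => ?_) (fun j => ?_) i
  · refine Fin.addCases (fun j0 => ?_) (fun j0 => ?_) j
    · have h1 : (Fin.castAdd 1 (Fin.castAdd l j0) : Fin (k + (l + 1)))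
          = Fin.castAdd (l + 1) j0 := by ext; simp
      simp only [finSumFinEquiv_symm_apply_castAdd, Sum.elim_inl, Sum.elim_inr]
      rw [h1]
      simp
    · have h1 : (Fin.castAdd 1 (Fin.natAdd k j0) : Fin (k + (l + 1)))
          = Fin.natAdd k (Fin.castAdd 1 j0) := by ext; simp
      simp only [finSumFinEquiv_symm_apply_castAdd, finSumFinEquiv_symm_apply_natAdd,
        Sum.elim_inl, Sum.elim_inr]
      rw [h1]
      simp
  · have h1 : (Fin.natAdd (k + l) j : Fin (k + (l + 1)))
        = Fin.natAdd k (Fin.natAdd l j) := by ext; simp [Nat.add_assoc]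
    simp only [finSumFinEquiv_symm_apply_natAdd, Sum.elim_inl, Sum.elim_inr]
    rw [h1]
    simp

lemma glue_zero (p : Fin k → A) (q : Fin 0 → A) :
    (fun i : Fin (k + 0) => Sum.elim p q (finSumFinEquiv.symm i)) = p := by
  funext i
  refine Fin.addCases (fun j => ?_) (fun j => j.elim0) i
  have h1 : (Fin.castAdd 0 j : Fin (k + 0)) = j := by ext; simp
  simp only [finSumFinEquiv_symm_apply_castAdd, Sum.elim_inl]
  rw [h1]

lemma glue_one (q : Fin 0 → A) (a : A) :
    (fun i : Fin (0 + 1) => Sum.elim q (fun _ : Fin 1 => a) (finSumFinEquiv.symm i))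
      = (fun _ : Fin (0 + 1) => a) := by
  funext i
  refine Fin.addCases (fun j => j.elim0) (fun j => ?_) i
  simp only [finSumFinEquiv_symm_apply_natAdd, Sum.elim_inr]

end glue


noncomputable def tau (m : ℕ) : TP A m ⊗[F2] A →ₗ[F2] TP A (m + 1) :=
  ((TensorProduct.congr (LinearEquiv.refl F2 (TP A m)) (fromA A)).trans
    (split A m 1).symm).toLinearMap

open PiTensorProduct in
lemma tau_tprod {m : ℕ} (p : Fin m → A) (a : A) :
    tau A m (tprod F2 p ⊗ₜ[F2] a)
      = tprod F2 (fun i => Sum.elim p (fun _ : Fin 1 => a) (finSumFinEquiv.symm i)) := by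
  have : tau A m (tprod F2 p ⊗ₜ[F2] a)
      = (split A m 1).symm (tprod F2 p ⊗ₜ[F2] fromA A a) := rfl
  rw [this, fromA_apply, splitSymm_tprod]

open PiTensorProduct in
lemma sig (k l : ℕ) (u : TP A k) (v : TP A l) (a : A) :
    tau A (k + l) ((split A k l).symm (u ⊗ₜ[F2] v) ⊗ₜ[F2] a)
      = (split A k (l + 1)).symm (u ⊗ₜ[F2] tau A l (v ⊗ₜ[F2] a)) := by
  induction u using PiTensorProduct.induction_on with
  | smul_tprod r p =>
    induction v using PiTensorProduct.induction_on with
    | smul_tprod s q =>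
      simp only [TensorProduct.tmul_smul, ← TensorProduct.smul_tmul', map_smul]
      rw [splitSymm_tprod, tau_tprod, tau_tprod, splitSymm_tprod, glue_assoc]
    | add x y hx hy =>
      simp only [TensorProduct.tmul_add, TensorProduct.add_tmul, map_add] at hx hy ⊢
      rw [hx, hy]
  | add x y hx hy =>
    simp only [TensorProduct.tmul_add, TensorProduct.add_tmul, map_add] at hx hy ⊢
    rw [hx, hy]


section comphelp
variable {X Y Z W X' Y' : Type} [AddCommGroup X] [Module F2 X] [AddCommGroup Y] [Module F2 Y]
  [AddCommGroup Z] [Module F2 Z] [AddCommGroup W] [Module F2 W]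
  [AddCommGroup X'] [Module F2 X'] [AddCommGroup Y'] [Module F2 Y']

lemma lmap_comp (f : Z →ₗ[F2] W) (g : Y →ₗ[F2] Z) :
    TensorProduct.map (LinearMap.id : X →ₗ[F2] X) (f ∘ₗ g)
      = TensorProduct.map LinearMap.id f ∘ₗ TensorProduct.map LinearMap.id g :=
  TensorProduct.ext' (fun _ _ => rfl)

lemma rmap_comp (f : Z →ₗ[F2] W) (g : Y →ₗ[F2] Z) :
    TensorProduct.map (f ∘ₗ g) (LinearMap.id : X →ₗ[F2] X)
      = TensorProduct.map f LinearMap.id ∘ₗ TensorProduct.map g LinearMap.id :=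
  TensorProduct.ext' (fun _ _ => rfl)

lemma map_exchange (f : X →ₗ[F2] X') (g : Y →ₗ[F2] Y') :
    TensorProduct.map f (LinearMap.id : Y' →ₗ[F2] Y') ∘ₗ TensorProduct.map LinearMap.id g
      = TensorProduct.map (LinearMap.id : X' →ₗ[F2] X') g ∘ₗ TensorProduct.map f LinearMap.id :=
  TensorProduct.ext' (fun _ _ => rfl)

end comphelp

lemma char2_add_self {X : Type*} [AddCommGroup X] [Module F2 X] (x : X) : x + x = 0 := by
  rw [← two_smul F2 x, show (2 : F2) = 0 from rfl, zero_smul]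



section TypeD

variable (N : Type) [AddCommGroup N] [Module F2 N]



variable (δ : N →ₗ[F2] A ⊗[F2] N)

noncomputable def Emap (m : ℕ) : TP A m ⊗[F2] N →ₗ[F2] TP A (m + 1) ⊗[F2] N :=
  (TensorProduct.map (tau A m) LinearMap.id)
    ∘ₗ (TensorProduct.assoc F2 (TP A m) A N).symm.toLinearMap
    ∘ₗ (TensorProduct.map LinearMap.id δ)

lemma delta_succ (m : ℕ) :
    δiter A N δ (m + 1) = Emap A N δ m ∘ₗ δiter A N δ m := rfl

open PiTensorProduct in
lemma delta_zero_apply (y : N) :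
    δiter A N δ 0 y = (isEmptyEquiv (Fin 0)).symm 1 ⊗ₜ[F2] y := by
  simp [δiter]

open PiTensorProduct in
lemma Estep (k l : ℕ) :
    Emap A N δ (k + l)
        ∘ₗ (TensorProduct.map (split A k l).symm.toLinearMap (LinearMap.id : N →ₗ[F2] N))
        ∘ₗ (TensorProduct.assoc F2 (TP A k) (TP A l) N).symm.toLinearMap
      = (TensorProduct.map (split A k (l + 1)).symm.toLinearMap LinearMap.id)
        ∘ₗ (TensorProduct.assoc F2 (TP A k) (TP A (l + 1)) N).symm.toLinearMap
        ∘ₗ (TensorProduct.map (LinearMap.id : TP A k →ₗ[F2] TP A k) (Emap A N δ l)) := by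
  apply TensorProduct.ext'
  intro u w
  induction w using TensorProduct.induction_on with
  | zero => simp only [TensorProduct.tmul_zero, map_zero]
  | tmul v y =>
    have key : ∀ w' : A ⊗[F2] N,
        (TensorProduct.map (tau A (k + l)) (LinearMap.id : N →ₗ[F2] N))
            ((TensorProduct.assoc F2 (TP A (k + l)) A N).symm
              ((split A k l).symm (u ⊗ₜ[F2] v) ⊗ₜ[F2] w'))
          = (TensorProduct.map (split A k (l + 1)).symm.toLinearMap
              (LinearMap.id : N →ₗ[F2] N))
            ((TensorProduct.assoc F2 (TP A k) (TP A (l + 1)) N).symm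
              (u ⊗ₜ[F2] ((TensorProduct.map (tau A l) (LinearMap.id : N →ₗ[F2] N))
                ((TensorProduct.assoc F2 (TP A l) A N).symm (v ⊗ₜ[F2] w'))))) := by
      intro w'
      induction w' using TensorProduct.induction_on with
      | zero => simp only [TensorProduct.tmul_zero, map_zero]
      | tmul a z =>
        simp only [TensorProduct.assoc_symm_tmul, TensorProduct.map_tmul, LinearMap.id_coe,
          id_eq, LinearEquiv.coe_coe]
        rw [sig]
      | add w1 w2 h1 h2 =>
        simp only [TensorProduct.tmul_add, map_add] at h1 h2 ⊢
        rw [h1, h2]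
    exact key (δ y)
  | add w1 w2 h1 h2 =>
    simp only [TensorProduct.tmul_add, map_add] at h1 h2 ⊢
    rw [h1, h2]

open PiTensorProduct in
lemma delta_add (k l : ℕ) :
    δiter A N δ (k + l)
      = (TensorProduct.map (split A k l).symm.toLinearMap (LinearMap.id : N →ₗ[F2] N))
        ∘ₗ (TensorProduct.assoc F2 (TP A k) (TP A l) N).symm.toLinearMap
        ∘ₗ (TensorProduct.map (LinearMap.id : TP A k →ₗ[F2] TP A k) (δiter A N δ l))
        ∘ₗ δiter A N δ k := by
  induction l with
  | zero =>
    have hΘ : (TensorProduct.map (split A k 0).symm.toLinearMap (LinearMap.id : N →ₗ[F2] N))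
        ∘ₗ (TensorProduct.assoc F2 (TP A k) (TP A 0) N).symm.toLinearMap
        ∘ₗ (TensorProduct.map (LinearMap.id : TP A k →ₗ[F2] TP A k) (δiter A N δ 0))
        = LinearMap.id := by
      apply TensorProduct.ext'
      intro u y
      have h0 : δiter A N δ 0 y = tprod F2 (fun i : Fin 0 => isEmptyElim i) ⊗ₜ[F2] y := by
        rw [delta_zero_apply]
        simp
      calc ((TensorProduct.map (split A k 0).symm.toLinearMap (LinearMap.id : N →ₗ[F2] N))
            ∘ₗ (TensorProduct.assoc F2 (TP A k) (TP A 0) N).symm.toLinearMap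
            ∘ₗ (TensorProduct.map (LinearMap.id : TP A k →ₗ[F2] TP A k) (δiter A N δ 0)))
            (u ⊗ₜ[F2] y)
          = (TensorProduct.map (split A k 0).symm.toLinearMap (LinearMap.id : N →ₗ[F2] N))
            ((TensorProduct.assoc F2 (TP A k) (TP A 0) N).symm
              (u ⊗ₜ[F2] (δiter A N δ 0 y))) := rfl
        _ = (TensorProduct.map (split A k 0).symm.toLinearMap (LinearMap.id : N →ₗ[F2] N))
            ((TensorProduct.assoc F2 (TP A k) (TP A 0) N).symm
              (u ⊗ₜ[F2] (tprod F2 (fun i : Fin 0 => isEmptyElim i) ⊗ₜ[F2] y))) := by rw [h0]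
        _ = (split A k 0).symm (u ⊗ₜ[F2] tprod F2 (fun i : Fin 0 => isEmptyElim i)) ⊗ₜ[F2] y
            := rfl
        _ = u ⊗ₜ[F2] y := by
            induction u using PiTensorProduct.induction_on with
            | smul_tprod r p =>
              simp only [← TensorProduct.smul_tmul', map_smul]
              rw [splitSymm_tprod, glue_zero]
            | add x y hx hy =>
              simp only [TensorProduct.add_tmul, map_add] at hx hy ⊢
              rw [hx, hy]
        _ = LinearMap.id (u ⊗ₜ[F2] y) := rfl
    calc δiter A N δ (k + 0) = LinearMap.id ∘ₗ δiter A N δ k := rfl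
      _ = _ := by rw [← hΘ]; rfl
  | succ l ih =>
    calc δiter A N δ (k + (l + 1)) = Emap A N δ (k + l) ∘ₗ δiter A N δ (k + l) :=
          delta_succ A N δ (k + l)
      _ = Emap A N δ (k + l)
          ∘ₗ ((TensorProduct.map (split A k l).symm.toLinearMap LinearMap.id)
            ∘ₗ ((TensorProduct.assoc F2 (TP A k) (TP A l) N).symm.toLinearMap
            ∘ₗ ((TensorProduct.map (LinearMap.id : TP A k →ₗ[F2] TP A k) (δiter A N δ l))
            ∘ₗ δiter A N δ k))) := by rw [ih]
      _ = (Emap A N δ (k + l)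
            ∘ₗ (TensorProduct.map (split A k l).symm.toLinearMap LinearMap.id)
            ∘ₗ (TensorProduct.assoc F2 (TP A k) (TP A l) N).symm.toLinearMap)
          ∘ₗ ((TensorProduct.map (LinearMap.id : TP A k →ₗ[F2] TP A k) (δiter A N δ l))
            ∘ₗ δiter A N δ k) := rfl
      _ = ((TensorProduct.map (split A k (l + 1)).symm.toLinearMap LinearMap.id)
            ∘ₗ (TensorProduct.assoc F2 (TP A k) (TP A (l + 1)) N).symm.toLinearMap
            ∘ₗ (TensorProduct.map (LinearMap.id : TP A k →ₗ[F2] TP A k) (Emap A N δ l)))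
          ∘ₗ ((TensorProduct.map (LinearMap.id : TP A k →ₗ[F2] TP A k) (δiter A N δ l))
            ∘ₗ δiter A N δ k) := by rw [Estep]
      _ = (TensorProduct.map (split A k (l + 1)).symm.toLinearMap LinearMap.id)
          ∘ₗ (TensorProduct.assoc F2 (TP A k) (TP A (l + 1)) N).symm.toLinearMap
          ∘ₗ (((TensorProduct.map (LinearMap.id : TP A k →ₗ[F2] TP A k) (Emap A N δ l))
            ∘ₗ (TensorProduct.map (LinearMap.id : TP A k →ₗ[F2] TP A k) (δiter A N δ l)))
            ∘ₗ δiter A N δ k) := rfl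
      _ = _ := by rw [← lmap_comp, ← delta_succ]

lemma castP {n m : ℕ} (h : n = m) :
    (TensorProduct.map (castTP A h) (LinearMap.id : N →ₗ[F2] N)) ∘ₗ δiter A N δ n
      = δiter A N δ m := by
  subst h
  rw [castTP_rfl, TensorProduct.map_id, LinearMap.id_comp]

open PiTensorProduct in
lemma tau_zero_fromA (a : A) :
    tau A 0 (((isEmptyEquiv (Fin 0)).symm 1 : TP A 0) ⊗ₜ[F2] a) = fromA A a := by
  have h1 : ((isEmptyEquiv (Fin 0)).symm 1 : TP A 0)
      = tprod F2 (fun i : Fin 0 => isEmptyElim i) := by simp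
  rw [h1, tau_tprod, glue_one, fromA_apply]

open PiTensorProduct in
lemma delta_one :
    δiter A N δ 1
      = (TensorProduct.map (fromA A).toLinearMap (LinearMap.id : N →ₗ[F2] N)) ∘ₗ δ := by
  apply LinearMap.ext
  intro y
  have key : ∀ w' : A ⊗[F2] N,
      (TensorProduct.map (tau A 0) (LinearMap.id : N →ₗ[F2] N))
          ((TensorProduct.assoc F2 (TP A 0) A N).symm
            (((isEmptyEquiv (Fin 0)).symm 1 : TP A 0) ⊗ₜ[F2] w'))
        = (TensorProduct.map (fromA A).toLinearMap (LinearMap.id : N →ₗ[F2] N)) w' := by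
    intro w'
    induction w' using TensorProduct.induction_on with
    | zero => simp only [TensorProduct.tmul_zero, map_zero]
    | tmul a z =>
      simp only [TensorProduct.assoc_symm_tmul, TensorProduct.map_tmul, LinearMap.id_coe,
        id_eq, LinearEquiv.coe_coe]
      rw [tau_zero_fromA]
    | add w1 w2 h1 h2 =>
      simp only [TensorProduct.tmul_add, map_add] at h1 h2 ⊢
      rw [h1, h2]
  have h1 : δiter A N δ 1 y
      = (TensorProduct.map (tau A 0) (LinearMap.id : N →ₗ[F2] N))
          ((TensorProduct.assoc F2 (TP A 0) A N).symm
            ((TensorProduct.map (LinearMap.id : TP A 0 →ₗ[F2] TP A 0) δ)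
              (δiter A N δ 0 y))) := rfl
  rw [h1, delta_zero_apply]
  have h2 : (TensorProduct.map (LinearMap.id : TP A 0 →ₗ[F2] TP A 0) δ)
      ((((isEmptyEquiv (Fin 0)).symm 1 : TP A 0)) ⊗ₜ[F2] y)
      = (((isEmptyEquiv (Fin 0)).symm 1 : TP A 0)) ⊗ₜ[F2] δ y := rfl
  rw [h2]
  exact key (δ y)

lemma mul₂_tau (a b : A) : mul₂ A (tau A 1 (fromA A a ⊗ₜ[F2] b)) = a * b := by
  have h1 : tau A 1 (fromA A a ⊗ₜ[F2] b)
      = (split A 1 1).symm (fromA A a ⊗ₜ[F2] fromA A b) := rfl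
  rw [h1]
  simp [mul₂, LinearEquiv.apply_symm_apply, LinearEquiv.symm_apply_apply]

open PiTensorProduct in
lemma core (dA : A →ₗ[F2] A) (hN : IsTypeD A N dA δ) :
    (TensorProduct.map ((fromA A).toLinearMap ∘ₗ dA ∘ₗ (fromA A).symm.toLinearMap)
        (LinearMap.id : N →ₗ[F2] N)) ∘ₗ δiter A N δ 1
      = (TensorProduct.map ((fromA A).toLinearMap ∘ₗ mul₂ A)
        (LinearMap.id : N →ₗ[F2] N)) ∘ₗ δiter A N δ 2 := by
  unfold IsTypeD at hN
  have hN' := char2_cancel (X := N →ₗ[F2] A ⊗[F2] N) hN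
  apply LinearMap.ext
  intro y
  have hNy : (TensorProduct.map (LinearMap.mul' F2 A) (LinearMap.id : N →ₗ[F2] N))
      ((TensorProduct.assoc F2 A A N).symm
        ((TensorProduct.map (LinearMap.id : A →ₗ[F2] A) δ) (δ y)))
      = (TensorProduct.map dA (LinearMap.id : N →ₗ[F2] N)) (δ y) := by
    have := LinearMap.congr_fun hN' y
    simpa using this
  -- LHS computation
  have hL : ∀ w : A ⊗[F2] N,
      (TensorProduct.map ((fromA A).toLinearMap ∘ₗ dA ∘ₗ (fromA A).symm.toLinearMap)
          (LinearMap.id : N →ₗ[F2] N))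
        ((TensorProduct.map (fromA A).toLinearMap (LinearMap.id : N →ₗ[F2] N)) w)
      = (TensorProduct.map (fromA A).toLinearMap (LinearMap.id : N →ₗ[F2] N))
        ((TensorProduct.map dA (LinearMap.id : N →ₗ[F2] N)) w) := by
    intro w
    induction w using TensorProduct.induction_on with
    | zero => simp only [map_zero]
    | tmul a z =>
      simp only [TensorProduct.map_tmul, LinearMap.comp_apply, LinearMap.id_coe, id_eq,
        LinearEquiv.coe_coe, LinearEquiv.symm_apply_apply]
    | add w1 w2 h1 h2 =>
      simp only [map_add] at h1 h2 ⊢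
      rw [h1, h2]
  -- RHS computation
  have hR : ∀ w : A ⊗[F2] N,
      (TensorProduct.map ((fromA A).toLinearMap ∘ₗ mul₂ A) (LinearMap.id : N →ₗ[F2] N))
        ((TensorProduct.map (tau A 1) (LinearMap.id : N →ₗ[F2] N))
          ((TensorProduct.assoc F2 (TP A 1) A N).symm
            ((TensorProduct.map (LinearMap.id : TP A 1 →ₗ[F2] TP A 1) δ)
              ((TensorProduct.map (fromA A).toLinearMap (LinearMap.id : N →ₗ[F2] N)) w))))
      = (TensorProduct.map (fromA A).toLinearMap (LinearMap.id : N →ₗ[F2] N))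
        ((TensorProduct.map (LinearMap.mul' F2 A) (LinearMap.id : N →ₗ[F2] N))
          ((TensorProduct.assoc F2 A A N).symm
            ((TensorProduct.map (LinearMap.id : A →ₗ[F2] A) δ) w))) := by
    intro w
    induction w using TensorProduct.induction_on with
    | zero => simp only [map_zero]
    | tmul a z =>
      have e1 : (TensorProduct.map (fromA A).toLinearMap (LinearMap.id : N →ₗ[F2] N))
          (a ⊗ₜ[F2] z) = fromA A a ⊗ₜ[F2] z := rfl
      have e2 : (TensorProduct.map (LinearMap.id : TP A 1 →ₗ[F2] TP A 1) δ)
          (fromA A a ⊗ₜ[F2] z) = fromA A a ⊗ₜ[F2] δ z := rfl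
      have e3 : (TensorProduct.map (LinearMap.id : A →ₗ[F2] A) δ) (a ⊗ₜ[F2] z)
          = a ⊗ₜ[F2] δ z := rfl
      rw [e1, e2, e3]
      induction δ z using TensorProduct.induction_on with
      | zero => simp only [TensorProduct.tmul_zero, map_zero]
      | tmul b z' =>
        simp only [TensorProduct.assoc_symm_tmul, TensorProduct.map_tmul,
          LinearMap.comp_apply, LinearMap.id_coe, id_eq, LinearEquiv.coe_coe,
          LinearMap.mul'_apply]
        rw [mul₂_tau]
      | add w1 w2 h1 h2 =>
        simp only [TensorProduct.tmul_add, map_add] at h1 h2 ⊢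
        rw [h1, h2]
    | add w1 w2 h1 h2 =>
      simp only [map_add] at h1 h2 ⊢
      rw [h1, h2]
  have d1 : δiter A N δ 1 y
      = (TensorProduct.map (fromA A).toLinearMap (LinearMap.id : N →ₗ[F2] N)) (δ y) :=
    LinearMap.congr_fun (delta_one A N δ) y
  have d2 : δiter A N δ 2 y
      = (TensorProduct.map (tau A 1) (LinearMap.id : N →ₗ[F2] N))
          ((TensorProduct.assoc F2 (TP A 1) A N).symm
            ((TensorProduct.map (LinearMap.id : TP A 1 →ₗ[F2] TP A 1) δ)
              ((TensorProduct.map (fromA A).toLinearMap (LinearMap.id : N →ₗ[F2] N))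
                (δ y)))) := by
    have : δiter A N δ 2 y
        = (TensorProduct.map (tau A 1) (LinearMap.id : N →ₗ[F2] N))
          ((TensorProduct.assoc F2 (TP A 1) A N).symm
            ((TensorProduct.map (LinearMap.id : TP A 1 →ₗ[F2] TP A 1) δ)
              (δiter A N δ 1 y))) := rfl
    rw [this, d1]
  simp only [LinearMap.comp_apply]
  rw [d1, d2, hL (δ y), hR (δ y), hNy]



lemma ins_P (i j l : ℕ) (φ : TP A j →ₗ[F2] A) :
    (TensorProduct.map (ins A i j l φ) (LinearMap.id : N →ₗ[F2] N)) ∘ₗ δiter A N δ (i + j + l)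
      = (TensorProduct.map (split A (i + 1) l).symm.toLinearMap (LinearMap.id : N →ₗ[F2] N))
        ∘ₗ (TensorProduct.assoc F2 (TP A (i + 1)) (TP A l) N).symm.toLinearMap
        ∘ₗ (TensorProduct.map (LinearMap.id : TP A (i + 1) →ₗ[F2] TP A (i + 1)) (δiter A N δ l))
        ∘ₗ (TensorProduct.map (split A i 1).symm.toLinearMap (LinearMap.id : N →ₗ[F2] N))
        ∘ₗ (TensorProduct.assoc F2 (TP A i) (TP A 1) N).symm.toLinearMap
        ∘ₗ (TensorProduct.map (LinearMap.id : TP A i →ₗ[F2] TP A i)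
            ((TensorProduct.map ((fromA A).toLinearMap ∘ₗ φ) (LinearMap.id : N →ₗ[F2] N))
              ∘ₗ δiter A N δ j))
        ∘ₗ δiter A N δ i := by
  apply LinearMap.ext
  intro y
  have d1 := LinearMap.congr_fun (delta_add A N δ (i + j) l) y
  have d2 := LinearMap.congr_fun (delta_add A N δ i j) y
  simp only [LinearMap.comp_apply] at d1 d2 ⊢
  rw [d1, d2]
  generalize δiter A N δ i y = w
  induction w using TensorProduct.induction_on with
  | zero => simp only [map_zero, TensorProduct.tmul_zero]
  | tmul u z =>
    simp only [TensorProduct.map_tmul, LinearMap.id_coe, id_eq, LinearMap.comp_apply]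
    generalize δiter A N δ j z = w2
    induction w2 using TensorProduct.induction_on with
    | zero => simp only [map_zero, TensorProduct.tmul_zero]
    | tmul v z2 =>
      simp only [TensorProduct.assoc_symm_tmul, TensorProduct.map_tmul, LinearMap.id_coe,
        id_eq, LinearEquiv.coe_coe]
      generalize δiter A N δ l z2 = w3
      induction w3 using TensorProduct.induction_on with
      | zero => simp only [map_zero, TensorProduct.tmul_zero]
      | tmul t z3 =>
        simp only [TensorProduct.assoc_symm_tmul, TensorProduct.map_tmul, LinearMap.id_coe,
          id_eq, LinearEquiv.coe_coe, ins, LinearMap.comp_apply,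
          LinearEquiv.apply_symm_apply]
      | add w1 w2 h1 h2 =>
        simp only [TensorProduct.tmul_add, map_add] at h1 h2 ⊢
        rw [h1, h2]
    | add w1 w2 h1 h2 =>
      simp only [TensorProduct.tmul_add, map_add] at h1 h2 ⊢
      rw [h1, h2]
  | add w1 w2 h1 h2 =>
    simp only [TensorProduct.tmul_add, map_add] at h1 h2 ⊢
    rw [h1, h2]

lemma key_cancel (i l : ℕ) (dA : A →ₗ[F2] A) (hN : IsTypeD A N dA δ) :
    (TensorProduct.map (ins A i 1 l (dA ∘ₗ (fromA A).symm.toLinearMap))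
        (LinearMap.id : N →ₗ[F2] N)) ∘ₗ δiter A N δ (i + 1 + l)
      = (TensorProduct.map (ins A i 2 l (mul₂ A)) (LinearMap.id : N →ₗ[F2] N))
        ∘ₗ δiter A N δ (i + 2 + l) := by
  rw [ins_P A N δ i 1 l, ins_P A N δ i 2 l, core A N δ dA hN]

section Mside

variable (M : Type) [AddCommGroup M] [Module F2 M]

noncomputable def Tmap (n : ℕ) (g : M ⊗[F2] TP A n →ₗ[F2] M) : M ⊗[F2] N →ₗ[F2] M ⊗[F2] N :=
  (TensorProduct.map g (LinearMap.id : N →ₗ[F2] N))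
    ∘ₗ (TensorProduct.assoc F2 M (TP A n) N).symm.toLinearMap
    ∘ₗ (TensorProduct.map (LinearMap.id : M →ₗ[F2] M) (δiter A N δ n))

lemma Tmap_zero (n : ℕ) : Tmap A N δ M n 0 = 0 := by
  unfold Tmap
  rw [TensorProduct.map_zero_left, LinearMap.zero_comp]

lemma Tmap_add (n : ℕ) (g g' : M ⊗[F2] TP A n →ₗ[F2] M) :
    Tmap A N δ M n (g + g') = Tmap A N δ M n g + Tmap A N δ M n g' := by
  unfold Tmap
  rw [TensorProduct.map_add_left, LinearMap.add_comp]

lemma Tmap_sum {ι : Type*} (n : ℕ) (s : Finset ι) (g : ι → (M ⊗[F2] TP A n →ₗ[F2] M)) :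
    Tmap A N δ M n (∑ i ∈ s, g i) = ∑ i ∈ s, Tmap A N δ M n (g i) := by
  classical
  induction s using Finset.cons_induction with
  | empty => simp [Tmap_zero]
  | cons a s ha ih =>
    rw [Finset.sum_cons, Finset.sum_cons, Tmap_add, ih]

lemma Tmap_of_delta_zero (n : ℕ) (g : M ⊗[F2] TP A n →ₗ[F2] M)
    (h : δiter A N δ n = 0) : Tmap A N δ M n g = 0 := by
  unfold Tmap
  rw [h, TensorProduct.map_zero_right, LinearMap.comp_zero, LinearMap.comp_zero]

/-- Naturality of the box differential shape in the algebra factor. -/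
lemma Tmap_natural {n : ℕ} {Q : Type} [AddCommGroup Q] [Module F2 Q]
    (α : TP A n →ₗ[F2] Q) (g : M ⊗[F2] Q →ₗ[F2] M) :
    Tmap A N δ M n (g ∘ₗ TensorProduct.map (LinearMap.id : M →ₗ[F2] M) α)
      = (TensorProduct.map g (LinearMap.id : N →ₗ[F2] N))
        ∘ₗ (TensorProduct.assoc F2 M Q N).symm.toLinearMap
        ∘ₗ (TensorProduct.map (LinearMap.id : M →ₗ[F2] M)
            ((TensorProduct.map α (LinearMap.id : N →ₗ[F2] N)) ∘ₗ δiter A N δ n)) := by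
  unfold Tmap
  rw [rmap_comp, lmap_comp]
  calc (TensorProduct.map g LinearMap.id
        ∘ₗ TensorProduct.map (TensorProduct.map (LinearMap.id : M →ₗ[F2] M) α) LinearMap.id)
        ∘ₗ (TensorProduct.assoc F2 M (TP A n) N).symm.toLinearMap
        ∘ₗ (TensorProduct.map (LinearMap.id : M →ₗ[F2] M) (δiter A N δ n))
      = TensorProduct.map g LinearMap.id
        ∘ₗ (TensorProduct.map (TensorProduct.map (LinearMap.id : M →ₗ[F2] M) α) LinearMap.id
          ∘ₗ (TensorProduct.assoc F2 M (TP A n) N).symm.toLinearMap)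
        ∘ₗ (TensorProduct.map (LinearMap.id : M →ₗ[F2] M) (δiter A N δ n)) := rfl
    _ = TensorProduct.map g LinearMap.id
        ∘ₗ ((TensorProduct.assoc F2 M Q N).symm.toLinearMap
          ∘ₗ TensorProduct.map (LinearMap.id : M →ₗ[F2] M)
              (TensorProduct.map α (LinearMap.id : N →ₗ[F2] N)))
        ∘ₗ (TensorProduct.map (LinearMap.id : M →ₗ[F2] M) (δiter A N δ n)) := by
        rw [TensorProduct.map_map_comp_assoc_symm_eq]
    _ = _ := rfl

lemma split_cancel (k l : ℕ) :
    TensorProduct.map (split A k l).toLinearMap (LinearMap.id : N →ₗ[F2] N)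
      ∘ₗ TensorProduct.map (split A k l).symm.toLinearMap (LinearMap.id : N →ₗ[F2] N)
      = LinearMap.id := by
  apply TensorProduct.ext'
  intro u y
  simp

lemma hsplit (k l : ℕ) :
    (TensorProduct.map (split A k l).toLinearMap (LinearMap.id : N →ₗ[F2] N))
        ∘ₗ δiter A N δ (k + l)
      = (TensorProduct.assoc F2 (TP A k) (TP A l) N).symm.toLinearMap
        ∘ₗ (TensorProduct.map (LinearMap.id : TP A k →ₗ[F2] TP A k) (δiter A N δ l))
        ∘ₗ δiter A N δ k := by
  rw [delta_add]
  calc (TensorProduct.map (split A k l).toLinearMap (LinearMap.id : N →ₗ[F2] N))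
      ∘ₗ ((TensorProduct.map (split A k l).symm.toLinearMap LinearMap.id)
        ∘ₗ ((TensorProduct.assoc F2 (TP A k) (TP A l) N).symm.toLinearMap
        ∘ₗ ((TensorProduct.map (LinearMap.id : TP A k →ₗ[F2] TP A k) (δiter A N δ l))
        ∘ₗ δiter A N δ k)))
      = ((TensorProduct.map (split A k l).toLinearMap (LinearMap.id : N →ₗ[F2] N))
          ∘ₗ TensorProduct.map (split A k l).symm.toLinearMap LinearMap.id)
        ∘ₗ (TensorProduct.assoc F2 (TP A k) (TP A l) N).symm.toLinearMap
        ∘ₗ (TensorProduct.map (LinearMap.id : TP A k →ₗ[F2] TP A k) (δiter A N δ l))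
        ∘ₗ δiter A N δ k := rfl
    _ = _ := by rw [split_cancel, LinearMap.id_comp]

lemma Tmap_comp (k l : ℕ) (g : M ⊗[F2] TP A k →ₗ[F2] M) (h : M ⊗[F2] TP A l →ₗ[F2] M) :
    Tmap A N δ M l h ∘ₗ Tmap A N δ M k g
      = Tmap A N δ M (k + l)
          (h ∘ₗ (TensorProduct.map g (LinearMap.id : TP A l →ₗ[F2] TP A l))
            ∘ₗ (TensorProduct.assoc F2 M (TP A k) (TP A l)).symm.toLinearMap
            ∘ₗ (TensorProduct.map (LinearMap.id : M →ₗ[F2] M) (split A k l).toLinearMap)) := by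
  have hT : Tmap A N δ M (k + l)
        (h ∘ₗ (TensorProduct.map g (LinearMap.id : TP A l →ₗ[F2] TP A l))
          ∘ₗ (TensorProduct.assoc F2 M (TP A k) (TP A l)).symm.toLinearMap
          ∘ₗ (TensorProduct.map (LinearMap.id : M →ₗ[F2] M) (split A k l).toLinearMap))
      = (TensorProduct.map (h ∘ₗ (TensorProduct.map g (LinearMap.id : TP A l →ₗ[F2] TP A l))
            ∘ₗ (TensorProduct.assoc F2 M (TP A k) (TP A l)).symm.toLinearMap)
          (LinearMap.id : N →ₗ[F2] N))
        ∘ₗ (TensorProduct.assoc F2 M (TP A k ⊗[F2] TP A l) N).symm.toLinearMap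
        ∘ₗ (TensorProduct.map (LinearMap.id : M →ₗ[F2] M)
            (((TensorProduct.assoc F2 (TP A k) (TP A l) N).symm.toLinearMap
              ∘ₗ (TensorProduct.map (LinearMap.id : TP A k →ₗ[F2] TP A k) (δiter A N δ l))
              ∘ₗ δiter A N δ k))) := by
    rw [← hsplit]
    exact Tmap_natural A N δ M (split A k l).toLinearMap
      (h ∘ₗ (TensorProduct.map g (LinearMap.id : TP A l →ₗ[F2] TP A l))
        ∘ₗ (TensorProduct.assoc F2 M (TP A k) (TP A l)).symm.toLinearMap)
  rw [hT]
  apply TensorProduct.ext'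
  intro x y
  have e1 : (Tmap A N δ M k g) (x ⊗ₜ[F2] y)
      = (TensorProduct.map g (LinearMap.id : N →ₗ[F2] N))
          ((TensorProduct.assoc F2 M (TP A k) N).symm (x ⊗ₜ[F2] δiter A N δ k y)) := rfl
  have e2 : ∀ w : TP A k ⊗[F2] N,
      (Tmap A N δ M l h) ((TensorProduct.map g (LinearMap.id : N →ₗ[F2] N))
          ((TensorProduct.assoc F2 M (TP A k) N).symm (x ⊗ₜ[F2] w)))
        = ((TensorProduct.map (h ∘ₗ (TensorProduct.map g
                (LinearMap.id : TP A l →ₗ[F2] TP A l))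
              ∘ₗ (TensorProduct.assoc F2 M (TP A k) (TP A l)).symm.toLinearMap)
            (LinearMap.id : N →ₗ[F2] N))
          ((TensorProduct.assoc F2 M (TP A k ⊗[F2] TP A l) N).symm
            (x ⊗ₜ[F2] ((TensorProduct.assoc F2 (TP A k) (TP A l) N).symm
              ((TensorProduct.map (LinearMap.id : TP A k →ₗ[F2] TP A k) (δiter A N δ l))
                w))))) := by
    intro w
    induction w using TensorProduct.induction_on with
    | zero => simp only [TensorProduct.tmul_zero, map_zero]
    | tmul u z =>
      have e3 : ∀ w' : TP A l ⊗[F2] N,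
          (TensorProduct.map h (LinearMap.id : N →ₗ[F2] N))
              ((TensorProduct.assoc F2 M (TP A l) N).symm (g (x ⊗ₜ[F2] u) ⊗ₜ[F2] w'))
            = ((TensorProduct.map (h ∘ₗ (TensorProduct.map g
                    (LinearMap.id : TP A l →ₗ[F2] TP A l))
                  ∘ₗ (TensorProduct.assoc F2 M (TP A k) (TP A l)).symm.toLinearMap)
                (LinearMap.id : N →ₗ[F2] N))
              ((TensorProduct.assoc F2 M (TP A k ⊗[F2] TP A l) N).symm
                (x ⊗ₜ[F2] ((TensorProduct.assoc F2 (TP A k) (TP A l) N).symm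
                  (u ⊗ₜ[F2] w'))))) := by
        intro w'
        induction w' using TensorProduct.induction_on with
        | zero => simp only [TensorProduct.tmul_zero, map_zero]
        | tmul v z' => rfl
        | add w1 w2 h1 h2 =>
          simp only [TensorProduct.tmul_add, map_add] at h1 h2 ⊢
          rw [h1, h2]
      exact e3 (δiter A N δ l z)
    | add w1 w2 h1 h2 =>
      simp only [TensorProduct.tmul_add, map_add] at h1 h2 ⊢
      rw [h1, h2]
  calc (Tmap A N δ M l h) ((Tmap A N δ M k g) (x ⊗ₜ[F2] y))
      = (Tmap A N δ M l h) ((TensorProduct.map g (LinearMap.id : N →ₗ[F2] N))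
          ((TensorProduct.assoc F2 M (TP A k) N).symm
            (x ⊗ₜ[F2] δiter A N δ k y))) := by rw [e1]
    _ = _ := e2 (δiter A N δ k y)

end Mside


end TypeD

section AinfModule

variable (M : Type) [AddCommGroup M] [Module F2 M]

/-- The `n`-th A_∞ module relation (over `F₂`, so without signs) for operations
`mm_k : M ⊗ A^{⊗k} → M` over the dg algebra `(A, dA)`:
`Σ m_{i+1}(m_{j+1} ⊗ id) + Σ m_{n+1}(id ⊗ ⋯ dA ⋯) + Σ m_n(id ⊗ ⋯ μ₂ ⋯) = 0`. -/
noncomputable def AinfRel (dA : A →ₗ[F2] A)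
    (mm : ∀ j, M ⊗[F2] TP A j →ₗ[F2] M) (n : ℕ) : Prop :=
  ((∑ j ∈ Finset.range (n + 1),
      if h : j ≤ n then
        (mm (n - j))
          ∘ₗ (TensorProduct.map (mm j) (LinearMap.id : TP A (n - j) →ₗ[F2] TP A (n - j)))
          ∘ₗ (TensorProduct.assoc F2 M (TP A j) (TP A (n - j))).symm.toLinearMap
          ∘ₗ (TensorProduct.map (LinearMap.id : M →ₗ[F2] M)
                ((split A j (n - j)).toLinearMap ∘ₗ castTP A (by omega : n = j + (n - j))))
      else 0)
    + (∑ i ∈ Finset.range n,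
        if h : i + 1 ≤ n then
          (mm n)
            ∘ₗ (TensorProduct.map (LinearMap.id : M →ₗ[F2] M)
                  ((castTP A (by omega : i + 1 + (n - 1 - i) = n))
                    ∘ₗ ins A i 1 (n - 1 - i) (dA ∘ₗ (fromA A).symm.toLinearMap)
                    ∘ₗ castTP A (by omega : n = i + 1 + (n - 1 - i))))
        else 0)
    + (∑ i ∈ Finset.range n,
        if h : i + 2 ≤ n then
          (mm (n - 1))
            ∘ₗ (TensorProduct.map (LinearMap.id : M →ₗ[F2] M)
                  ((castTP A (by omega : i + 1 + (n - 2 - i) = n - 1))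
                    ∘ₗ ins A i 2 (n - 2 - i) (mul₂ A)
                    ∘ₗ castTP A (by omega : n = i + 2 + (n - 2 - i))))
        else 0))
  = (0 : M ⊗[F2] TP A n →ₗ[F2] M)

end AinfModule

section Assemble

variable (N : Type) [AddCommGroup N] [Module F2 N]
variable (M : Type) [AddCommGroup M] [Module F2 M]

variable (δ : N →ₗ[F2] A ⊗[F2] N)

lemma Tmap_cast {n m : ℕ} (h : n = m) {Q : Type} [AddCommGroup Q] [Module F2 Q]
    (β : TP A m →ₗ[F2] Q) (g : M ⊗[F2] Q →ₗ[F2] M) :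
    Tmap A N δ M n (g ∘ₗ TensorProduct.map (LinearMap.id : M →ₗ[F2] M) (β ∘ₗ castTP A h))
      = Tmap A N δ M m (g ∘ₗ TensorProduct.map (LinearMap.id : M →ₗ[F2] M) β) := by
  subst h
  rw [castTP_rfl, LinearMap.comp_id]

lemma pair (dA : A →ₗ[F2] A) (hN : IsTypeD A N dA δ) (i l n : ℕ) (h1 : i + 1 + l = n)
    (g : M ⊗[F2] TP A n →ₗ[F2] M) :
    Tmap A N δ M (i + 1 + l) (g ∘ₗ TensorProduct.map (LinearMap.id : M →ₗ[F2] M)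
        (castTP A h1 ∘ₗ ins A i 1 l (dA ∘ₗ (fromA A).symm.toLinearMap)))
      = Tmap A N δ M (i + 2 + l) (g ∘ₗ TensorProduct.map (LinearMap.id : M →ₗ[F2] M)
        (castTP A h1 ∘ₗ ins A i 2 l (mul₂ A))) := by
  rw [Tmap_natural, Tmap_natural]
  have e : (TensorProduct.map (castTP A h1 ∘ₗ ins A i 1 l (dA ∘ₗ (fromA A).symm.toLinearMap))
        (LinearMap.id : N →ₗ[F2] N)) ∘ₗ δiter A N δ (i + 1 + l)
      = (TensorProduct.map (castTP A h1 ∘ₗ ins A i 2 l (mul₂ A))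
        (LinearMap.id : N →ₗ[F2] N)) ∘ₗ δiter A N δ (i + 2 + l) := by
    rw [rmap_comp, rmap_comp, LinearMap.comp_assoc, LinearMap.comp_assoc,
      key_cancel A N δ i l dA hN]
  rw [e]

variable (mm : ∀ j, M ⊗[F2] TP A j →ₗ[F2] M)

lemma second_eq_third (dA : A →ₗ[F2] A) (hN : IsTypeD A N dA δ) (n i : ℕ)
    (h1 : i + 1 + (n - 1 - i) = n) (h2 : n = i + 1 + (n - 1 - i))
    (h2' : n + 1 = i + 2 + (n - 1 - i)) :
    Tmap A N δ M n ((mm n) ∘ₗ TensorProduct.map (LinearMap.id : M →ₗ[F2] M)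
        ((castTP A h1) ∘ₗ ins A i 1 (n - 1 - i) (dA ∘ₗ (fromA A).symm.toLinearMap)
          ∘ₗ castTP A h2))
      = Tmap A N δ M (n + 1) ((mm n) ∘ₗ TensorProduct.map (LinearMap.id : M →ₗ[F2] M)
        ((castTP A h1) ∘ₗ ins A i 2 (n - 1 - i) (mul₂ A) ∘ₗ castTP A h2')) := by
  calc Tmap A N δ M n ((mm n) ∘ₗ TensorProduct.map (LinearMap.id : M →ₗ[F2] M)
        ((castTP A h1) ∘ₗ ins A i 1 (n - 1 - i) (dA ∘ₗ (fromA A).symm.toLinearMap)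
          ∘ₗ castTP A h2))
      = Tmap A N δ M (i + 1 + (n - 1 - i)) ((mm n)
          ∘ₗ TensorProduct.map (LinearMap.id : M →ₗ[F2] M)
            ((castTP A h1) ∘ₗ ins A i 1 (n - 1 - i) (dA ∘ₗ (fromA A).symm.toLinearMap))) :=
        Tmap_cast A N M δ h2
          ((castTP A h1) ∘ₗ ins A i 1 (n - 1 - i) (dA ∘ₗ (fromA A).symm.toLinearMap)) (mm n)
    _ = Tmap A N δ M (i + 2 + (n - 1 - i)) ((mm n)
          ∘ₗ TensorProduct.map (LinearMap.id : M →ₗ[F2] M)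
            ((castTP A h1) ∘ₗ ins A i 2 (n - 1 - i) (mul₂ A))) :=
        pair A N M δ dA hN i (n - 1 - i) n h1 (mm n)
    _ = _ := (Tmap_cast A N M δ h2'
          ((castTP A h1) ∘ₗ ins A i 2 (n - 1 - i) (mul₂ A)) (mm n)).symm

noncomputable def Phi (n : ℕ) : M ⊗[F2] N →ₗ[F2] M ⊗[F2] N :=
  ∑ i ∈ Finset.range n,
    if h : i + 2 ≤ n then
      Tmap A N δ M n ((mm (n - 1)) ∘ₗ TensorProduct.map (LinearMap.id : M →ₗ[F2] M)
        ((castTP A (show i + 1 + (n - 2 - i) = n - 1 by omega))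
          ∘ₗ ins A i 2 (n - 2 - i) (mul₂ A)
          ∘ₗ castTP A (show n = i + 2 + (n - 2 - i) by omega)))
    else 0

lemma comp_double {X : Type} [AddCommGroup X] [Module F2 X] {ι κ : Type*}
    (s : Finset ι) (t : Finset κ) (f : ι → X →ₗ[F2] X) (g : κ → X →ₗ[F2] X) :
    (∑ i ∈ s, f i) ∘ₗ (∑ j ∈ t, g j) = ∑ i ∈ s, ∑ j ∈ t, (f i ∘ₗ g j) := by
  apply LinearMap.ext
  intro x
  simp [LinearMap.sum_apply, map_sum]

lemma sum_reindex {β : Type*} [AddCommMonoid β] (K : ℕ) (g : ℕ → ℕ → β)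
    (hg : ∀ k l, K ≤ k + l → g k l = 0) :
    ∑ l ∈ Finset.range K, ∑ k ∈ Finset.range K, g k l
      = ∑ n ∈ Finset.range K, ∑ j ∈ Finset.range (n + 1), g j (n - j) := by
  classical
  have h1 : ∑ l ∈ Finset.range K, ∑ k ∈ Finset.range K, g k l
      = ∑ p ∈ Finset.range K ×ˢ Finset.range K, g p.2 p.1 := by
    rw [Finset.sum_product]
  have h2 : ∑ p ∈ Finset.range K ×ˢ Finset.range K, g p.2 p.1
      = ∑ p ∈ (Finset.range K ×ˢ Finset.range K).filter (fun p => p.1 + p.2 < K),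
          g p.2 p.1 := by
    refine (Finset.sum_subset (Finset.filter_subset _ _) ?_).symm
    intro p hp hnp
    have hK : K ≤ p.1 + p.2 := by
      simp only [Finset.mem_filter, hp, true_and, not_lt] at hnp
      exact hnp
    exact hg p.2 p.1 (by omega)
  have h3 : ∑ n ∈ Finset.range K, ∑ j ∈ Finset.range (n + 1), g j (n - j)
      = ∑ q ∈ (Finset.range K).sigma (fun n => Finset.range (n + 1)), g q.2 (q.1 - q.2) := by
    rw [Finset.sum_sigma]
  rw [h1, h2, h3]
  refine Finset.sum_nbij' (fun p => ⟨p.1 + p.2, p.2⟩) (fun q => (q.1 - q.2, q.2))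
    ?_ ?_ ?_ ?_ ?_
  · intro p hp
    simp only [Finset.mem_filter, Finset.mem_product, Finset.mem_range] at hp
    simp only [Finset.mem_sigma, Finset.mem_range]
    omega
  · intro q hq
    simp only [Finset.mem_sigma, Finset.mem_range] at hq
    simp only [Finset.mem_filter, Finset.mem_product, Finset.mem_range]
    omega
  · intro p hp
    simp only [Finset.mem_filter, Finset.mem_product, Finset.mem_range] at hp
    have h : p.1 + p.2 - p.2 = p.1 := by omega
    simp only [h]
  · intro q hq
    rcases q with ⟨n, j⟩
    simp only [Finset.mem_sigma, Finset.mem_range] at hq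
    simp only
    have h : n - j + j = n := by omega
    rw [h]
  · intro p hp
    simp only [Finset.mem_filter, Finset.mem_product, Finset.mem_range] at hp
    have : p.1 + p.2 - p.2 = p.1 := by omega
    rw [this]

noncomputable def FS (n : ℕ) : M ⊗[F2] TP A n →ₗ[F2] M :=
  ∑ j ∈ Finset.range (n + 1),
    if h : j ≤ n then
      (mm (n - j))
        ∘ₗ (TensorProduct.map (mm j) (LinearMap.id : TP A (n - j) →ₗ[F2] TP A (n - j)))
        ∘ₗ (TensorProduct.assoc F2 M (TP A j) (TP A (n - j))).symm.toLinearMap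
        ∘ₗ (TensorProduct.map (LinearMap.id : M →ₗ[F2] M)
              ((split A j (n - j)).toLinearMap ∘ₗ castTP A (by omega : n = j + (n - j))))
    else 0

noncomputable def SS (dA : A →ₗ[F2] A) (n : ℕ) : M ⊗[F2] TP A n →ₗ[F2] M :=
  ∑ i ∈ Finset.range n,
    if h : i + 1 ≤ n then
      (mm n)
        ∘ₗ (TensorProduct.map (LinearMap.id : M →ₗ[F2] M)
              ((castTP A (by omega : i + 1 + (n - 1 - i) = n))
                ∘ₗ ins A i 1 (n - 1 - i) (dA ∘ₗ (fromA A).symm.toLinearMap)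
                ∘ₗ castTP A (by omega : n = i + 1 + (n - 1 - i))))
    else 0

noncomputable def TS (n : ℕ) : M ⊗[F2] TP A n →ₗ[F2] M :=
  ∑ i ∈ Finset.range n,
    if h : i + 2 ≤ n then
      (mm (n - 1))
        ∘ₗ (TensorProduct.map (LinearMap.id : M →ₗ[F2] M)
              ((castTP A (by omega : i + 1 + (n - 2 - i) = n - 1))
                ∘ₗ ins A i 2 (n - 2 - i) (mul₂ A)
                ∘ₗ castTP A (by omega : n = i + 2 + (n - 2 - i))))
    else 0

lemma hFS_lemma (n : ℕ) :
    Tmap A N δ M n (FS A M mm n)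
      = ∑ j ∈ Finset.range (n + 1),
          Tmap A N δ M (j + (n - j))
            ((mm (n - j))
              ∘ₗ (TensorProduct.map (mm j) (LinearMap.id : TP A (n - j) →ₗ[F2] TP A (n - j)))
              ∘ₗ (TensorProduct.assoc F2 M (TP A j) (TP A (n - j))).symm.toLinearMap
              ∘ₗ (TensorProduct.map (LinearMap.id : M →ₗ[F2] M)
                    (split A j (n - j)).toLinearMap)) := by
  rw [FS, Tmap_sum]
  refine Finset.sum_congr rfl fun j hj => ?_
  have hj' : j ≤ n := Nat.lt_succ_iff.mp (Finset.mem_range.mp hj)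
  rw [dif_pos hj']
  exact Tmap_cast A N M δ (by omega : n = j + (n - j)) (split A j (n - j)).toLinearMap
    ((mm (n - j))
      ∘ₗ (TensorProduct.map (mm j) (LinearMap.id : TP A (n - j) →ₗ[F2] TP A (n - j)))
      ∘ₗ (TensorProduct.assoc F2 M (TP A j) (TP A (n - j))).symm.toLinearMap)

lemma hSS_lemma (dA : A →ₗ[F2] A) (hN : IsTypeD A N dA δ) (n : ℕ) :
    Tmap A N δ M n (SS A M mm dA n) = Phi A N M δ mm (n + 1) := by
  rw [SS, Tmap_sum]
  have hPhi : Phi A N M δ mm (n + 1)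
      = ∑ i ∈ Finset.range n,
          (if h : i + 2 ≤ n + 1 then
            Tmap A N δ M (n + 1) ((mm (n + 1 - 1))
              ∘ₗ TensorProduct.map (LinearMap.id : M →ₗ[F2] M)
                ((castTP A (show i + 1 + (n + 1 - 2 - i) = n + 1 - 1 by omega))
                  ∘ₗ ins A i 2 (n + 1 - 2 - i) (mul₂ A)
                  ∘ₗ castTP A (show n + 1 = i + 2 + (n + 1 - 2 - i) by omega)))
          else 0) := by
    rw [Phi, Finset.sum_range_succ, dif_neg (by omega : ¬ (n + 2 ≤ n + 1)), add_zero]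
  rw [hPhi]
  refine Finset.sum_congr rfl fun i hi => ?_
  have hi' : i + 1 ≤ n := Finset.mem_range.mp hi
  rw [dif_pos hi', dif_pos (by omega : i + 2 ≤ n + 1)]
  exact second_eq_third A N M δ mm dA hN n i (by omega) (by omega) (by omega)

lemma hTS_lemma (n : ℕ) :
    Tmap A N δ M n (TS A M mm n) = Phi A N M δ mm n := by
  rw [TS, Tmap_sum, Phi]
  refine Finset.sum_congr rfl fun i hi => ?_
  by_cases h : i + 2 ≤ n
  · rw [dif_pos h, dif_pos h]
  · rw [dif_neg h, dif_neg h, Tmap_zero]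


end Assemble

/-- Let `A` be a dg algebra over `F₂`, `(N, δ¹)` a bounded type D
structure over `A` (i.e. the iterated structure maps `δ_m` vanish for all
sufficiently large `m`), and `(M, {m_{k+1}})` a right A_∞-module over `A`.  Then
the box-tensor differential `∂ = Σ_{m ≥ 0} (m_{m+1} ⊗ id_N)(id_M ⊗ δ_m)` on
`M ⊗ N` is a finite sum and satisfies `∂² = 0`. -/

theorem stmt_12 (dA : A →ₗ[F2] A) (hdA : dA ∘ₗ dA = 0)
    (hLeib : ∀ a b : A, dA (a * b) = dA a * b + a * dA b)
    (M : Type) [AddCommGroup M] [Module F2 M]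
    (N : Type) [AddCommGroup N] [Module F2 N]
    (mm : ∀ j, M ⊗[F2] TP A j →ₗ[F2] M)
    (hM : ∀ n, AinfRel A M dA mm n)
    (δ : N →ₗ[F2] A ⊗[F2] N) (hN : IsTypeD A N dA δ)
    (hbdd : ∃ K, ∀ m, K ≤ m → δiter A N δ m = 0) :
    (Function.support (fun m =>
        (TensorProduct.map (mm m) (LinearMap.id : N →ₗ[F2] N))
          ∘ₗ (TensorProduct.assoc F2 M (TP A m) N).symm.toLinearMap
          ∘ₗ (TensorProduct.map (LinearMap.id : M →ₗ[F2] M) (δiter A N δ m)))).Finite ∧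
    (∑ᶠ m, (TensorProduct.map (mm m) (LinearMap.id : N →ₗ[F2] N))
        ∘ₗ (TensorProduct.assoc F2 M (TP A m) N).symm.toLinearMap
        ∘ₗ (TensorProduct.map (LinearMap.id : M →ₗ[F2] M) (δiter A N δ m)))
      ∘ₗ (∑ᶠ m, (TensorProduct.map (mm m) (LinearMap.id : N →ₗ[F2] N))
        ∘ₗ (TensorProduct.assoc F2 M (TP A m) N).symm.toLinearMap
        ∘ₗ (TensorProduct.map (LinearMap.id : M →ₗ[F2] M) (δiter A N δ m)))
      = 0 := by
  classical
  obtain ⟨K, hK⟩ := hbdd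
  have hD : ∀ m, K ≤ m →
      (TensorProduct.map (mm m) (LinearMap.id : N →ₗ[F2] N))
        ∘ₗ (TensorProduct.assoc F2 M (TP A m) N).symm.toLinearMap
        ∘ₗ (TensorProduct.map (LinearMap.id : M →ₗ[F2] M) (δiter A N δ m)) = 0 :=
    fun m hm => Tmap_of_delta_zero A N δ M m (mm m) (hK m hm)
  have hsupp : Function.support (fun m =>
      (TensorProduct.map (mm m) (LinearMap.id : N →ₗ[F2] N))
        ∘ₗ (TensorProduct.assoc F2 M (TP A m) N).symm.toLinearMap
        ∘ₗ (TensorProduct.map (LinearMap.id : M →ₗ[F2] M) (δiter A N δ m)))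
      ⊆ ↑(Finset.range K) := by
    intro m hm
    simp only [Function.mem_support] at hm
    simp only [Finset.coe_range, Set.mem_Iio]
    by_contra h
    exact hm (hD m (le_of_not_gt h))
  refine ⟨Set.Finite.subset (Finset.range K).finite_toSet hsupp, ?_⟩
  rw [finsum_eq_sum_of_support_subset _ hsupp]
  show (∑ m ∈ Finset.range K, Tmap A N δ M m (mm m))
      ∘ₗ (∑ m ∈ Finset.range K, Tmap A N δ M m (mm m)) = 0
  set g2 : ℕ → ℕ → (M ⊗[F2] N →ₗ[F2] M ⊗[F2] N) := fun k l =>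
    Tmap A N δ M (k + l)
      ((mm l) ∘ₗ (TensorProduct.map (mm k) (LinearMap.id : TP A l →ₗ[F2] TP A l))
        ∘ₗ (TensorProduct.assoc F2 M (TP A k) (TP A l)).symm.toLinearMap
        ∘ₗ (TensorProduct.map (LinearMap.id : M →ₗ[F2] M) (split A k l).toLinearMap))
    with hg2def
  have hg2 : ∀ k l, K ≤ k + l → g2 k l = 0 := by
    intro k l h
    exact Tmap_of_delta_zero A N δ M (k + l) _ (hK (k + l) h)
  calc (∑ m ∈ Finset.range K, Tmap A N δ M m (mm m))
      ∘ₗ (∑ m ∈ Finset.range K, Tmap A N δ M m (mm m))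
      = ∑ l ∈ Finset.range K, ∑ k ∈ Finset.range K,
          (Tmap A N δ M l (mm l) ∘ₗ Tmap A N δ M k (mm k)) := comp_double _ _ _ _
    _ = ∑ l ∈ Finset.range K, ∑ k ∈ Finset.range K, g2 k l := by
        refine Finset.sum_congr rfl fun l _ => Finset.sum_congr rfl fun k _ => ?_
        exact Tmap_comp A N δ M k l (mm k) (mm l)
    _ = ∑ n ∈ Finset.range K, ∑ j ∈ Finset.range (n + 1), g2 j (n - j) :=
        sum_reindex K g2 hg2
    _ = ∑ n ∈ Finset.range K, Tmap A N δ M n (FS A M mm n) := by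
        refine Finset.sum_congr rfl fun n _ => ?_
        exact (hFS_lemma A N M δ mm n).symm
    _ = ∑ n ∈ Finset.range K,
          (Tmap A N δ M n (SS A M mm dA n) + Tmap A N δ M n (TS A M mm n)) := by
        refine Finset.sum_congr rfl fun n _ => ?_
        have h : FS A M mm n + SS A M mm dA n + TS A M mm n = 0 := hM n
        rw [add_assoc] at h
        rw [char2_cancel h, Tmap_add]
    _ = (∑ n ∈ Finset.range K, Tmap A N δ M n (SS A M mm dA n))
        + ∑ n ∈ Finset.range K, Tmap A N δ M n (TS A M mm n) := Finset.sum_add_distrib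
    _ = (∑ n ∈ Finset.range K, Phi A N M δ mm (n + 1))
        + ∑ n ∈ Finset.range K, Phi A N M δ mm n := by
        rw [Finset.sum_congr rfl fun n _ => hSS_lemma A N M δ mm dA hN n,
          Finset.sum_congr rfl fun n _ => hTS_lemma A N M δ mm n]
    _ = (∑ n ∈ Finset.range K, Phi A N M δ mm n)
        + ∑ n ∈ Finset.range K, Phi A N M δ mm n := by
        have h0 : Phi A N M δ mm 0 = 0 := by simp [Phi]
        have hKz : Phi A N M δ mm K = 0 := by
          rw [Phi]
          refine Finset.sum_eq_zero fun i hi => ?_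
          by_cases h : i + 2 ≤ K
          · rw [dif_pos h]
            exact Tmap_of_delta_zero A N δ M K _ (hK K le_rfl)
          · rw [dif_neg h]
        have e1 := Finset.sum_range_succ' (fun n => Phi A N M δ mm n) K
        have e2 := Finset.sum_range_succ (fun n => Phi A N M δ mm n) K
        rw [h0, add_zero] at e1
        rw [hKz, add_zero] at e2
        rw [← e1, e2]
    _ = 0 := char2_add_self _



end Stmt12
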